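/- arXiv:1710.10924 — 2 statements merged into one kernel-verified Lean document; each statement's English description precedes it below -/
import Mathlib

section
/- For positive real numbers p and q, there exists a strictly isomorphic rectangle partition pair for (p,q) of some finite size k if and only if p/q is rational. -/
open scoped Classical

/-- An axis-parallel rectangle in the plane, given by its coordinates. -/
structure Rect where
  x1 : ℝ
  x2 : ℝ
  y1 : ℝ
  y2 : ℝ

namespace Rect

/-- The horizontal side length. -/
def width (r : Rect) : ℝ := r.x2 - r.x1

/-- The vertical side length. -/
def height (r : Rect) : ℝ := r.y2 - r.y1

/-- The closed rectangle as a set of points. -/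
def carrier (r : Rect) : Set (ℝ × ℝ) := Set.Icc r.x1 r.x2 ×ˢ Set.Icc r.y1 r.y2

/-- The interior of the rectangle. -/
def inner (r : Rect) : Set (ℝ × ℝ) := Set.Ioo r.x1 r.x2 ×ˢ Set.Ioo r.y1 r.y2

/-- The rectangle is nondegenerate. -/
def Nondeg (r : Rect) : Prop := r.x1 < r.x2 ∧ r.y1 < r.y2

end Rect

/-- `P` is a rectangle partition of `[0, W] × [0, H]`: finitely many nondegenerate
rectangles with pairwise disjoint interiors whose union is `[0, W] × [0, H]`. -/
def IsRectPartition {k : ℕ} (W H : ℝ) (P : Fin k → Rect) : Prop :=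
  (∀ i, (P i).Nondeg) ∧
  (∀ i j : Fin k, i ≠ j → (P i).inner ∩ (P j).inner = ∅) ∧
  (⋃ i, (P i).carrier) = Set.Icc (0 : ℝ) W ×ˢ Set.Icc (0 : ℝ) H

/-- `P1`, `P2`, `σ` form a strictly isomorphic rectangle partition pair between the
rectangles `a × b` and `c × d`: matched modules have equal width and equal height. -/
def IsStrictIsoPair (a b c d : ℝ) {k : ℕ} (P1 P2 : Fin k → Rect)
    (σ : Equiv.Perm (Fin k)) : Prop :=
  IsRectPartition a b P1 ∧ IsRectPartition c d P2 ∧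
  ∀ i, (P1 i).width = (P2 (σ i)).width ∧ (P1 i).height = (P2 (σ i)).height

/-- There is a strictly isomorphic rectangle partition pair between `a × b` and `c × d`
of size `k`. -/
def StrictPairGen (a b c d : ℝ) (k : ℕ) : Prop :=
  ∃ (P1 P2 : Fin k → Rect) (σ : Equiv.Perm (Fin k)), IsStrictIsoPair a b c d P1 P2 σ

/-- A strictly isomorphic rectangle partition pair for `(p, q)` of size `k`:
partitions of `[0,p] × [0,q]` and `[0,q] × [0,p]` with a matching preserving
widths and heights. -/
def StrictPair (p q : ℝ) (k : ℕ) : Prop := StrictPairGen p q q p k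

/-- An isomorphic rectangle partition pair (rotation allowed) between `a × b` and
`c × d` of size `k`: matched modules have the same unordered pair of side lengths. -/
def IsoPairRot (a b c d : ℝ) (k : ℕ) : Prop :=
  ∃ (P1 P2 : Fin k → Rect) (σ : Equiv.Perm (Fin k)),
    IsRectPartition a b P1 ∧ IsRectPartition c d P2 ∧
    ∀ i, ((P1 i).width = (P2 (σ i)).width ∧ (P1 i).height = (P2 (σ i)).height) ∨
         ((P1 i).width = (P2 (σ i)).height ∧ (P1 i).height = (P2 (σ i)).width)

/-- A slat rectangle partition: if horizontal sides of two modules lie on the same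
horizontal line and overlap in more than one point, they are identical segments. -/
def IsSlat {k : ℕ} (P : Fin k → Rect) : Prop :=
  ∀ i j : Fin k, ∀ yi ∈ ({(P i).y1, (P i).y2} : Set ℝ),
    ∀ yj ∈ ({(P j).y1, (P j).y2} : Set ℝ), yi = yj →
      max (P i).x1 (P j).x1 < min (P i).x2 (P j).x2 →
      (P i).x1 = (P j).x1 ∧ (P i).x2 = (P j).x2

/-!
For arbitrary `f g : ℝ → ℝ`, every partition of `[0,W] × [0,H]` into modules
`[x₁,x₂] × [y₁,y₂]` satisfies `∑ (f x₂ - f x₁) (g y₂ - g y₁) = (f W - f 0) (g H - g 0)`.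
Indeed the half-open modules `(x₁,x₂] × (y₁,y₂]` tile `(0,W] × (0,H]` exactly, so the
products of step-function differences `(1_(x₁,∞) - 1_(x₂,∞)) ⊗ (1_(y₁,∞) - 1_(y₂,∞))` add up
to the one of the big rectangle; as the step functions `1_(a,∞)` are linearly independent,
any `f` extends to a linear functional sending `1_(a,∞)` to `f a`, and this can be applied in
each variable.

For additive `f` and `g` the summands only depend on the widths and heights of the modules,
so a strictly isomorphic pair for `(p, q)` forces `f p * g q = f q * g p`. When `p / q` is
irrational, a `ℚ`-linear `f` with `f q = 0 ≠ f p` and `g = id` contradict this. When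
`p / q = m / n`, both rectangles are tiled by `m n` squares of side `q / n`.
-/

open Set Filter Topology Function

theorem LinearIndependent.exists_linearMap_apply_eq {ι K V V' : Type*} [Field K]
    [AddCommGroup V] [Module K V] [AddCommGroup V'] [Module K V'] {v : ι → V}
    (hv : LinearIndependent K v) (w : ι → V') : ∃ L : V →ₗ[K] V', ∀ i, L (v i) = w i := by
  obtain ⟨L, hL⟩ := (Finsupp.linearCombination K w ∘ₗ hv.repr).exists_extend
  refine ⟨L, fun i => ?_⟩
  have hvi : v i ∈ Submodule.span K (range v) := Submodule.subset_span (mem_range_self i)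
  simpa [hv.repr_eq_single i ⟨v i, hvi⟩ rfl] using LinearMap.congr_fun hL ⟨v i, hvi⟩

theorem linearIndependent_indicator_Ioi :
    LinearIndependent ℝ fun a : ℝ => (Ioi a).indicator (1 : ℝ → ℝ) := by
  rw [linearIndependent_iff']
  intro s c hsum b hb
  -- `c b` is the jump of `∑ a ∈ s, c a • 1_(a,∞)` at `b`, read off just to the right of `b`
  have hval : ∀ x, ∑ a ∈ s, c a * (Ioi a).indicator 1 x = 0 := fun x => by
    simpa using congrFun hsum x
  obtain ⟨x, hx⟩ : ∃ x, ∀ a ∈ s, (a < x ↔ a ≤ b) := by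
    refine (Finset.eventually_all s |>.2 fun a _ => ?_).exists (f := 𝓝[>] b)
    rcases le_or_gt a b with hab | hab
    · filter_upwards [self_mem_nhdsWithin] with x hx using iff_of_true (hab.trans_lt hx) hab
    · filter_upwards [Ioo_mem_nhdsGT hab] with x hx using iff_of_false hx.2.not_gt hab.not_ge
  have hjump : ∀ a ∈ s, (Ioi a).indicator (1 : ℝ → ℝ) x - (Ioi a).indicator 1 b =
      if a = b then 1 else 0 := by
    intro a ha
    have hax := hx a ha
    rcases lt_trichotomy a b with hab | rfl | hab
    · simp [hax.2 hab.le, hab, hab.ne]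
    · simp [hax.2 le_rfl]
    · simp [hax, hab.not_ge, hab.not_gt, hab.ne']
  calc c b = ∑ a ∈ s, c a * ((Ioi a).indicator 1 x - (Ioi a).indicator 1 b) := by
        rw [Finset.sum_congr rfl fun a ha => by rw [hjump a ha]]
        simp [hb]
    _ = 0 := by simp [mul_sub, hval]

theorem exists_linearMap_indicator_Ioi (f : ℝ → ℝ) :
    ∃ Λ : (ℝ → ℝ) →ₗ[ℝ] ℝ, ∀ a, Λ ((Ioi a).indicator 1) = f a :=
  linearIndependent_indicator_Ioi.exists_linearMap_apply_eq f

theorem sum_mul_sub_eq_of_sum_smul_indicator_Ioi {ι : Type*} [Fintype ι] {c a b : ι → ℝ}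
    {C A B : ℝ} (h : ∑ i, c i • ((Ioi (a i)).indicator 1 - (Ioi (b i)).indicator 1) =
      C • ((Ioi A).indicator 1 - (Ioi B).indicator (1 : ℝ → ℝ))) (f : ℝ → ℝ) :
    ∑ i, c i * (f (b i) - f (a i)) = C * (f B - f A) := by
  obtain ⟨Λ, hΛ⟩ := exists_linearMap_indicator_Ioi (-f)
  simpa [hΛ, neg_add_eq_sub] using congrArg Λ h

theorem eventually_sub_mem_Ioo {a b x : ℝ} (hx : x ∈ Ioc a b) :
    ∀ᶠ t in 𝓝[>] 0, x - t ∈ Ioo a b := by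
  filter_upwards [Ioo_mem_nhdsGT (sub_pos.2 hx.1)] with t ht
  exact ⟨by linarith [ht.2], by linarith [ht.1, hx.2]⟩

theorem mem_Ioc_of_frequently_sub_mem_Icc {a b x : ℝ} (h : ∃ᶠ t in 𝓝[>] 0, x - t ∈ Icc a b) :
    x ∈ Ioc a b := by
  obtain ⟨t, ht, ht0⟩ := (h.and_eventually self_mem_nhdsWithin).exists
  refine ⟨by linarith [ht.1, ht0], le_of_not_gt fun hbx => ?_⟩
  obtain ⟨t, ht, ht'⟩ := (h.and_eventually (Ioo_mem_nhdsGT (sub_pos.2 hbx))).exists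
  linarith [ht.2, ht'.2]

namespace Rect

def halfOpen (r : Rect) : Set (ℝ × ℝ) := Ioc r.x1 r.x2 ×ˢ Ioc r.y1 r.y2

theorem inner_subset_carrier (r : Rect) : r.inner ⊆ r.carrier :=
  prod_mono Ioo_subset_Icc_self Ioo_subset_Icc_self

theorem eventually_sub_mem_inner {r : Rect} {z : ℝ × ℝ} (hz : z ∈ r.halfOpen) :
    ∀ᶠ t in 𝓝[>] 0, z - (t, t) ∈ r.inner :=
  (eventually_sub_mem_Ioo hz.1).and (eventually_sub_mem_Ioo hz.2)

theorem mem_halfOpen_of_frequently {r : Rect} {z : ℝ × ℝ}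
    (h : ∃ᶠ t in 𝓝[>] 0, z - (t, t) ∈ r.carrier) : z ∈ r.halfOpen :=
  ⟨mem_Ioc_of_frequently_sub_mem_Icc (h.mono fun _ ht => ht.1),
    mem_Ioc_of_frequently_sub_mem_Icc (h.mono fun _ ht => ht.2)⟩

theorem indicator_halfOpen {r : Rect} (hx : r.x1 ≤ r.x2) (hy : r.y1 ≤ r.y2) (x y : ℝ) :
    r.halfOpen.indicator 1 (x, y) =
      ((Ioi r.x1).indicator 1 x - (Ioi r.x2).indicator 1 x) *
        ((Ioi r.y1).indicator 1 y - (Ioi r.y2).indicator (1 : ℝ → ℝ) y) := by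
  rw [halfOpen, indicator_prod_one, ← Ioi_sdiff_Ioi, ← Ioi_sdiff_Ioi,
    indicator_sdiff (Ioi_subset_Ioi hx), indicator_sdiff (Ioi_subset_Ioi hy)]
  rfl

end Rect

namespace IsRectPartition

variable {k : ℕ} {W H : ℝ} {P : Fin k → Rect}

theorem pairwise_disjoint_halfOpen (h : IsRectPartition W H P) :
    Pairwise (Disjoint on fun i => (P i).halfOpen) := by
  intro i j hij
  refine Set.disjoint_left.2 fun z hi hj => ?_
  obtain ⟨t, hti, htj⟩ :=
    ((Rect.eventually_sub_mem_inner hi).and (Rect.eventually_sub_mem_inner hj)).exists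
  exact (h.2.1 i j hij).subset ⟨hti, htj⟩

theorem iUnion_halfOpen (h : IsRectPartition W H P) :
    ⋃ i, (P i).halfOpen = (Rect.mk 0 W 0 H).halfOpen := by
  have hcarrier : (Rect.mk 0 W 0 H).carrier = ⋃ i, (P i).carrier := h.2.2.symm
  apply Subset.antisymm
  · refine iUnion_subset fun i z hz => Rect.mem_halfOpen_of_frequently ?_
    refine ((Rect.eventually_sub_mem_inner hz).mono fun t ht => ?_).frequently
    exact hcarrier ▸ subset_iUnion (fun i => (P i).carrier) i ((P i).inner_subset_carrier ht)
  · intro z hz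
    have : ∃ᶠ t in 𝓝[>] 0, ∃ i, z - (t, t) ∈ (P i).carrier :=
      ((Rect.eventually_sub_mem_inner hz).mono fun t ht =>
        mem_iUnion.1 (hcarrier ▸ Rect.inner_subset_carrier _ ht)).frequently
    obtain ⟨i, hi⟩ := frequently_exists.1 this
    exact mem_iUnion.2 ⟨i, Rect.mem_halfOpen_of_frequently hi⟩

theorem sum_indicator_halfOpen (h : IsRectPartition W H P) (z : ℝ × ℝ) :
    ∑ i, (P i).halfOpen.indicator 1 z =
      (Rect.mk 0 W 0 H).halfOpen.indicator (1 : ℝ × ℝ → ℝ) z := by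
  rw [← h.iUnion_halfOpen]
  simpa using (Finset.indicator_biUnion_apply Finset.univ _
    (h.pairwise_disjoint_halfOpen.set_pairwise _) z).symm

theorem sum_sub_mul_sub (h : IsRectPartition W H P) (hW : 0 ≤ W) (hH : 0 ≤ H) (f g : ℝ → ℝ) :
    ∑ i, (f (P i).x2 - f (P i).x1) * (g (P i).y2 - g (P i).y1) =
      (f W - f 0) * (g H - g 0) := by
  have key (x y : ℝ) := h.sum_indicator_halfOpen (x, y)
  simp only [fun i => Rect.indicator_halfOpen (h.1 i).1.le (h.1 i).2.le,
    Rect.indicator_halfOpen (r := Rect.mk 0 W 0 H) hW hH] at key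
  have hf (y : ℝ) := sum_mul_sub_eq_of_sum_smul_indicator_Ioi
    (a := fun i => (P i).x1) (b := fun i => (P i).x2) (A := 0) (B := W)
    (c := fun i => (Ioi (P i).y1).indicator 1 y - (Ioi (P i).y2).indicator 1 y)
    (C := (Ioi 0).indicator 1 y - (Ioi H).indicator 1 y)
    (funext fun x => by simpa [mul_comm] using key x y) f
  exact sum_mul_sub_eq_of_sum_smul_indicator_Ioi
    (funext fun y => by simpa [mul_comm] using hf y) g

theorem sum_map_width_mul_map_height (h : IsRectPartition W H P) (hW : 0 ≤ W) (hH : 0 ≤ H)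
    (f g : ℝ →+ ℝ) : ∑ i, f (P i).width * g (P i).height = f W * g H := by
  simpa [Rect.width, Rect.height] using h.sum_sub_mul_sub hW hH f g

end IsRectPartition

theorem IsStrictIsoPair.map_mul_map_eq {a b c d : ℝ} {k : ℕ} {P₁ P₂ : Fin k → Rect}
    {σ : Equiv.Perm (Fin k)} (h : IsStrictIsoPair a b c d P₁ P₂ σ)
    (ha : 0 ≤ a) (hb : 0 ≤ b) (hc : 0 ≤ c) (hd : 0 ≤ d) (f g : ℝ →+ ℝ) :
    f a * g b = f c * g d := by
  obtain ⟨h₁, h₂, hσ⟩ := h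
  calc f a * g b = ∑ i, f (P₁ i).width * g (P₁ i).height :=
        (h₁.sum_map_width_mul_map_height ha hb f g).symm
    _ = ∑ i, f (P₂ (σ i)).width * g (P₂ (σ i)).height := by simp only [hσ]
    _ = ∑ i, f (P₂ i).width * g (P₂ i).height :=
        Equiv.sum_comp σ fun i => f (P₂ i).width * g (P₂ i).height
    _ = f c * g d := h₂.sum_map_width_mul_map_height hc hd f g

theorem exists_addMonoidHom_ne_zero_of_irrational_div {p q : ℝ} (h : Irrational (p / q)) :
    ∃ φ : ℝ →+ ℝ, φ p ≠ 0 ∧ φ q = 0 := by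
  have hq : q ≠ 0 := (div_ne_zero_iff.1 h.ne_zero).2
  have hp : p ∉ Submodule.span ℚ {q} := fun hmem => by
    obtain ⟨r, rfl⟩ := Submodule.mem_span_singleton.1 hmem
    exact h ⟨r, by rw [Rat.smul_def, mul_div_cancel_right₀ _ hq]⟩
  obtain ⟨φ, hφp, hφq⟩ := Submodule.exists_le_ker_of_notMem hp
  refine ⟨(Rat.castHom ℝ).toAddMonoidHom.comp φ.toAddMonoidHom, by simpa using hφp, ?_⟩
  simpa using hφq (Submodule.mem_span_singleton_self q)

namespace Rect

def square (s : ℝ) (i j : ℕ) : Rect := ⟨i * s, (i + 1) * s, j * s, (j + 1) * s⟩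

@[simp]
theorem square_width (s : ℝ) (i j : ℕ) : (square s i j).width = s := by
  simp only [square, width]; ring

@[simp]
theorem square_height (s : ℝ) (i j : ℕ) : (square s i j).height = s := by
  simp only [square, height]; ring

end Rect

theorem iUnion_Icc_mul {m : ℕ} (hm : m ≠ 0) {s : ℝ} (hs : 0 < s) :
    ⋃ i : Fin m, Icc ((i : ℝ) * s) ((i + 1) * s) = Icc 0 (m * s) := by
  apply Subset.antisymm
  · refine iUnion_subset fun i x hx => ⟨le_trans (by positivity) hx.1, hx.2.trans ?_⟩
    gcongr
    exact_mod_cast i.isLt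
  · intro x hx
    -- the cap at `m - 1` catches the right endpoint `x = m * s`
    set i := min ⌊x / s⌋₊ (m - 1)
    have him : i < m := (min_le_right _ _).trans_lt (Nat.sub_one_lt hm)
    refine mem_iUnion.2 ⟨⟨i, him⟩, ?_, ?_⟩
    · calc (i : ℝ) * s ≤ ⌊x / s⌋₊ * s := by gcongr; exact min_le_left _ _
        _ ≤ x / s * s := by gcongr; exact Nat.floor_le (div_nonneg hx.1 hs.le)
        _ = x := div_mul_cancel₀ x hs.ne'
    · rcases min_choice ⌊x / s⌋₊ (m - 1) with hi | hi <;> simp only [i, hi]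
      · rw [← div_le_iff₀ hs]; exact (Nat.lt_floor_add_one _).le
      · rw [Nat.cast_sub (Nat.one_le_iff_ne_zero.2 hm)]; simpa using hx.2

theorem disjoint_Ioo_mul {i j : ℕ} (hij : i ≠ j) {s : ℝ} (hs : 0 < s) :
    Disjoint (Ioo ((i : ℝ) * s) ((i + 1) * s)) (Ioo ((j : ℝ) * s) ((j + 1) * s)) := by
  wlog h : i < j generalizing i j
  · exact (this hij.symm (lt_of_le_of_ne (not_lt.1 h) hij.symm)).symm
  have hle : ((i : ℝ) + 1) * s ≤ j * s := by gcongr; exact_mod_cast h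
  exact disjoint_left.2 fun x hx hx' => by linarith [hx.2, hx'.1]

theorem isRectPartition_square {m n k : ℕ} (hm : m ≠ 0) (hn : n ≠ 0) {s : ℝ} (hs : 0 < s)
    (e : Fin m × Fin n ≃ Fin k) :
    IsRectPartition (m * s) (n * s) fun l => Rect.square s (e.symm l).1 (e.symm l).2 := by
  refine ⟨fun l => ⟨by simp only [Rect.square]; linarith, by simp only [Rect.square]; linarith⟩,
    fun l l' hll' => ?_, ?_⟩
  · have hne : (e.symm l).1 ≠ (e.symm l').1 ∨ (e.symm l).2 ≠ (e.symm l').2 := by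
      rw [← not_and_or, ← Prod.ext_iff]
      exact e.symm.injective.ne hll'
    rw [← disjoint_iff_inter_eq_empty, Rect.inner, Rect.inner, Set.disjoint_prod]
    exact hne.imp (fun h => disjoint_Ioo_mul (Fin.val_injective.ne h) hs)
      (fun h => disjoint_Ioo_mul (Fin.val_injective.ne h) hs)
  · rw [e.symm.surjective.iUnion_comp fun ij => (Rect.square s ij.1 ij.2).carrier,
      ← iUnion_Icc_mul hm hs, ← iUnion_Icc_mul hn hs]
    exact iUnion_prod (fun i : Fin m => Icc ((i : ℝ) * s) ((i + 1) * s))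
      fun j : Fin n => Icc ((j : ℝ) * s) ((j + 1) * s)

theorem strictPair_nat_mul {m n : ℕ} (hm : m ≠ 0) (hn : n ≠ 0) {s : ℝ} (hs : 0 < s) :
    StrictPair (m * s) (n * s) (m * n) :=
  ⟨_, _, Equiv.refl _, isRectPartition_square hm hn hs finProdFinEquiv,
    isRectPartition_square hn hm hs (finProdFinEquiv.trans (finCongr (mul_comm n m))),
    fun _ => by simp⟩

theorem exists_eq_nat_mul_of_div_eq_ratCast {p q : ℝ} (hp : 0 < p) (hq : 0 < q) {r : ℚ}
    (hr : (r : ℝ) = p / q) :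
    ∃ m n : ℕ, m ≠ 0 ∧ n ≠ 0 ∧ ∃ s : ℝ, 0 < s ∧ p = m * s ∧ q = n * s := by
  have hr0 : 0 < r := by exact_mod_cast hr ▸ div_pos hp hq
  refine ⟨r.num.natAbs, r.den, Int.natAbs_ne_zero.2 (Rat.num_ne_zero.2 hr0.ne'), r.den_ne_zero,
    q / r.den, by positivity, ?_, by field_simp⟩
  have hnum : ((r.num.natAbs : ℕ) : ℝ) = r.num := by
    rw [Nat.cast_natAbs, Int.cast_abs, abs_of_pos (by exact_mod_cast Rat.num_pos.2 hr0)]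
  rw [hnum, mul_div_assoc', mul_div_right_comm, ← Rat.cast_def, hr, div_mul_cancel₀ p hq.ne']

/-- `SRTP(p,q)` has a solution of some finite size iff `p/q` is rational. -/
theorem srtp_solvable_iff_rational (p q : ℝ) (hp : 0 < p) (hq : 0 < q) :
    (∃ k : ℕ, StrictPair p q k) ↔ ¬ Irrational (p / q) := by
  constructor
  · rintro ⟨k, P₁, P₂, σ, hpair⟩ hirr
    obtain ⟨φ, hφp, hφq⟩ := exists_addMonoidHom_ne_zero_of_irrational_div hirr
    have := hpair.map_mul_map_eq hp.le hq.le hq.le hp.le φ (AddMonoidHom.id ℝ)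
    simp [hφq, hφp, hq.ne'] at this
  · intro hrat
    obtain ⟨r, hr⟩ := not_not.1 hrat
    obtain ⟨m, n, hm, hn, s, hs, rfl, rfl⟩ := exists_eq_nat_mul_of_div_eq_ratCast hp hq hr
    exact ⟨m * n, strictPair_nat_mul hm hn hs⟩
end

section
/- (Square-transfer reduction step.) Let p and q be positive integers with p < q and p not dividing q, let Δ = q mod p (so 0 < Δ < p), and let t = ⌊√(p/Δ − 1)⌋, where the division and square root are over the reals; assume t ≥ 1. If there exists a strictly isomorphic rectangle partition pair for (Δ, p − t²·Δ) of size s, then there exists a strictly isomorphic rectangle partition pair for (p,q) of size ⌊q/p⌋ + 2t + 1 + s. -/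
open scoped Classical

namespace Rect

/-- Translate a rectangle by `(u, v)`. -/
def translate (r : Rect) (u v : ℝ) : Rect := ⟨r.x1 + u, r.x2 + u, r.y1 + v, r.y2 + v⟩

/-- Transpose (reflect across the diagonal). -/
def transp (r : Rect) : Rect := ⟨r.y1, r.y2, r.x1, r.x2⟩

lemma carrier_translate (r : Rect) (u v : ℝ) :
    (r.translate u v).carrier = (fun z : ℝ × ℝ => (z.1 - u, z.2 - v)) ⁻¹' r.carrier := by
  ext ⟨x, y⟩
  simp only [carrier, translate, Set.mem_preimage, Set.mem_prod, Set.mem_Icc]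
  constructor <;> rintro ⟨⟨h1, h2⟩, h3, h4⟩ <;>
    exact ⟨⟨by linarith, by linarith⟩, by linarith, by linarith⟩

lemma inner_translate (r : Rect) (u v : ℝ) :
    (r.translate u v).inner = (fun z : ℝ × ℝ => (z.1 - u, z.2 - v)) ⁻¹' r.inner := by
  ext ⟨x, y⟩
  simp only [inner, translate, Set.mem_preimage, Set.mem_prod, Set.mem_Ioo]
  constructor <;> rintro ⟨⟨h1, h2⟩, h3, h4⟩ <;>
    exact ⟨⟨by linarith, by linarith⟩, by linarith, by linarith⟩

lemma carrier_transp (r : Rect) : r.transp.carrier = Prod.swap ⁻¹' r.carrier := by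
  ext ⟨x, y⟩
  simp only [carrier, transp, Set.mem_preimage, Set.mem_prod, Set.mem_Icc, Prod.fst_swap,
    Prod.snd_swap]
  tauto

lemma inner_transp (r : Rect) : r.transp.inner = Prod.swap ⁻¹' r.inner := by
  ext ⟨x, y⟩
  simp only [inner, transp, Set.mem_preimage, Set.mem_prod, Set.mem_Ioo, Prod.fst_swap,
    Prod.snd_swap]
  tauto

end Rect

/-- A partition of the rectangle `[a,b] × [c,d]` indexed by an arbitrary type. -/
def PartOn {ι : Type} (a b c d : ℝ) (P : ι → Rect) : Prop :=
  (∀ i, (P i).Nondeg) ∧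
  (∀ i j, i ≠ j → (P i).inner ∩ (P j).inner = ∅) ∧
  (⋃ i, (P i).carrier) = Set.Icc a b ×ˢ Set.Icc c d

lemma isRectPartition_iff_partOn {k : ℕ} {W H : ℝ} {P : Fin k → Rect} :
    IsRectPartition W H P ↔ PartOn 0 W 0 H P := Iff.rfl

lemma PartOn.bounds {ι : Type} {a b c d : ℝ} {P : ι → Rect} (h : PartOn a b c d P) (i : ι) :
    a ≤ (P i).x1 ∧ (P i).x2 ≤ b ∧ c ≤ (P i).y1 ∧ (P i).y2 ≤ d := by
  obtain ⟨hn, -, hU⟩ := h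
  have hsub : (P i).carrier ⊆ Set.Icc a b ×ˢ Set.Icc c d := by
    rw [← hU]; exact Set.subset_iUnion (fun i => (P i).carrier) i
  have m1 : ((P i).x1, (P i).y1) ∈ (P i).carrier :=
    ⟨⟨le_rfl, (hn i).1.le⟩, le_rfl, (hn i).2.le⟩
  have m2 : ((P i).x2, (P i).y2) ∈ (P i).carrier :=
    ⟨⟨(hn i).1.le, le_rfl⟩, (hn i).2.le, le_rfl⟩
  have b1 := hsub m1
  have b2 := hsub m2
  exact ⟨b1.1.1, b2.1.2, b1.2.1, b2.2.2⟩

lemma PartOn.copy {ι : Type} {a b c d a' b' c' d' : ℝ} {P : ι → Rect}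
    (h : PartOn a b c d P) (ha : a = a') (hb : b = b') (hc : c = c') (hd : d = d') :
    PartOn a' b' c' d' P := by subst ha hb hc hd; exact h

lemma partOn_congr {ι : Type} {a b c d : ℝ} {P P' : ι → Rect}
    (hPP : ∀ i, P i = P' i) (h : PartOn a b c d P) : PartOn a b c d P' := by
  have : P = P' := funext hPP
  subst this; exact h

lemma partOn_reindex {ι ι' : Type} {a b c d : ℝ} {P : ι → Rect} (e : ι' ≃ ι)
    (h : PartOn a b c d P) : PartOn a b c d (fun i => P (e i)) := by
  refine ⟨fun i => h.1 (e i), fun i j hij => h.2.1 _ _ (fun hh => hij (e.injective hh)), ?_⟩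
  rw [← h.2.2]
  exact e.surjective.iUnion_comp (fun i => (P i).carrier)

lemma partOn_single {a b c d : ℝ} (hab : a < b) (hcd : c < d) :
    PartOn a b c d (fun _ : Unit => (⟨a, b, c, d⟩ : Rect)) := by
  refine ⟨fun _ => ⟨hab, hcd⟩, fun i j hij => absurd (Subsingleton.elim i j) hij, ?_⟩
  simp [Set.iUnion_const, Rect.carrier]

lemma partOn_translate {ι : Type} {a b c d : ℝ} {P : ι → Rect}
    (h : PartOn a b c d P) (u v : ℝ) :
    PartOn (a + u) (b + u) (c + v) (d + v) (fun i => (P i).translate u v) := by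
  refine ⟨?_, ?_, ?_⟩
  · intro i
    have := h.1 i
    exact ⟨by simp only [Rect.translate]; linarith [this.1], by
      simp only [Rect.translate]; linarith [this.2]⟩
  · intro i j hij
    rw [Rect.inner_translate, Rect.inner_translate, ← Set.preimage_inter, h.2.1 i j hij,
      Set.preimage_empty]
  · have : ⋃ i, ((P i).translate u v).carrier
        = (fun z : ℝ × ℝ => (z.1 - u, z.2 - v)) ⁻¹' ⋃ i, (P i).carrier := by
      simp only [Rect.carrier_translate, Set.preimage_iUnion]
    rw [this, h.2.2]
    ext ⟨x, y⟩
    simp only [Set.mem_preimage, Set.mem_prod, Set.mem_Icc]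
    constructor <;> rintro ⟨⟨h1, h2⟩, h3, h4⟩ <;>
      exact ⟨⟨by linarith, by linarith⟩, by linarith, by linarith⟩

lemma partOn_transpose {ι : Type} {a b c d : ℝ} {P : ι → Rect}
    (h : PartOn a b c d P) : PartOn c d a b (fun i => (P i).transp) := by
  refine ⟨fun i => ⟨(h.1 i).2, (h.1 i).1⟩, ?_, ?_⟩
  · intro i j hij
    rw [Rect.inner_transp, Rect.inner_transp, ← Set.preimage_inter, h.2.1 i j hij,
      Set.preimage_empty]
  · have : ⋃ i, ((P i).transp).carrier = Prod.swap ⁻¹' ⋃ i, (P i).carrier := by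
      simp only [Rect.carrier_transp, Set.preimage_iUnion]
    rw [this, h.2.2, Set.preimage_swap_prod]

lemma partOn_glueV {ι κ : Type} {a b c d e : ℝ} {P : ι → Rect} {Q : κ → Rect}
    (hcd : c ≤ d) (hde : d ≤ e) (hP : PartOn a b c d P) (hQ : PartOn a b d e Q) :
    PartOn a b c e (Sum.elim P Q) := by
  have key : ∀ (i : ι) (j : κ), (P i).inner ∩ (Q j).inner = ∅ := by
    intro i j
    rw [Set.eq_empty_iff_forall_notMem]
    rintro ⟨x, y⟩ ⟨⟨-, -, hy1⟩, -, hy2, -⟩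
    have b1 := (hP.bounds i).2.2.2
    have b2 := (hQ.bounds j).2.2.1
    linarith
  refine ⟨?_, ?_, ?_⟩
  · rintro (i | j)
    exacts [hP.1 i, hQ.1 j]
  · rintro (i | i) (j | j) hij
    · exact hP.2.1 i j (by simpa using hij)
    · exact key i j
    · rw [Set.inter_comm]; exact key j i
    · exact hQ.2.1 i j (by simpa using hij)
  · rw [Set.iUnion_sum]
    simp only [Sum.elim_inl, Sum.elim_inr]
    rw [hP.2.2, hQ.2.2, ← Set.prod_union, Set.Icc_union_Icc_eq_Icc hcd hde]

lemma partOn_glueH {ι κ : Type} {a b c d e : ℝ} {P : ι → Rect} {Q : κ → Rect}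
    (hab : a ≤ b) (hbe : b ≤ e) (hP : PartOn a b c d P) (hQ : PartOn b e c d Q) :
    PartOn a e c d (Sum.elim P Q) := by
  have key : ∀ (i : ι) (j : κ), (P i).inner ∩ (Q j).inner = ∅ := by
    intro i j
    rw [Set.eq_empty_iff_forall_notMem]
    rintro ⟨x, y⟩ ⟨⟨⟨-, hx1⟩, -⟩, ⟨hx2, -⟩, -⟩
    have b1 := (hP.bounds i).2.1
    have b2 := (hQ.bounds j).1
    linarith
  refine ⟨?_, ?_, ?_⟩
  · rintro (i | j)
    exacts [hP.1 i, hQ.1 j]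
  · rintro (i | i) (j | j) hij
    · exact hP.2.1 i j (by simpa using hij)
    · exact key i j
    · rw [Set.inter_comm]; exact key j i
    · exact hQ.2.1 i j (by simpa using hij)
  · rw [Set.iUnion_sum]
    simp only [Sum.elim_inl, Sum.elim_inr]
    rw [hP.2.2, hQ.2.2, ← Set.union_prod, Set.Icc_union_Icc_eq_Icc hab hbe]

lemma exists_row {h : ℝ} (hh : 0 < h) (c : ℝ) :
    ∀ n : ℕ, ∀ y : ℝ, c ≤ y → y ≤ c + n * h → 0 < n →
      ∃ i : Fin n, c + (i : ℕ) * h ≤ y ∧ y ≤ c + ((i : ℕ) + 1) * h := by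
  intro n
  induction n with
  | zero => intro y _ _ h0; exact absurd h0 (lt_irrefl 0)
  | succ n ih =>
    intro y hcy hyn _
    by_cases hle : y ≤ c + n * h
    · rcases Nat.eq_zero_or_pos n with rfl | hn
      · refine ⟨⟨0, Nat.zero_lt_one⟩, ?_, ?_⟩ <;> push_cast <;> simp at hle ⊢ <;> linarith
      · obtain ⟨i, h1, h2⟩ := ih y hcy hle hn
        exact ⟨i.castSucc, by simpa using h1, by simpa using h2⟩
    · push_neg at hle
      refine ⟨⟨n, n.lt_succ_self⟩, ?_, ?_⟩ <;> push_cast at hyn ⊢ <;> linarith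

lemma partOn_rows {n : ℕ} {a b c d h : ℝ} (hab : a < b) (hh : 0 < h) (hn : 0 < n)
    (hd : d = c + n * h) (R : Fin n → Rect)
    (hx1 : ∀ i, (R i).x1 = a) (hx2 : ∀ i, (R i).x2 = b)
    (hy1 : ∀ i, (R i).y1 = c + (i : ℕ) * h) (hy2 : ∀ i, (R i).y2 = c + ((i : ℕ) + 1) * h) :
    PartOn a b c d R := by
  have key : ∀ i j : Fin n, (i : ℕ) < (j : ℕ) → (R i).inner ∩ (R j).inner = ∅ := by
    intro i j hij
    rw [Set.eq_empty_iff_forall_notMem]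
    rintro ⟨x, y⟩ ⟨⟨-, -, p1⟩, -, p2, -⟩
    rw [hy2 i] at p1
    rw [hy1 j] at p2
    have : ((i : ℕ) : ℝ) + 1 ≤ ((j : ℕ) : ℝ) := by exact_mod_cast hij
    nlinarith
  refine ⟨?_, ?_, ?_⟩
  · intro i
    refine ⟨by rw [hx1, hx2]; exact hab, ?_⟩
    rw [hy1, hy2]
    nlinarith
  · intro i j hij
    rcases lt_or_gt_of_ne (fun hv : (i : ℕ) = (j : ℕ) => hij (Fin.ext hv)) with hlt | hgt
    · exact key i j hlt
    · rw [Set.inter_comm]; exact key j i hgt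
  · ext ⟨x, y⟩
    simp only [Set.mem_iUnion, Rect.carrier, Set.mem_prod, Set.mem_Icc, hx1, hx2, hy1, hy2, hd]
    constructor
    · rintro ⟨i, ⟨hax, hxb⟩, hy1', hy2'⟩
      have hge : (0 : ℝ) ≤ ((i : ℕ) : ℝ) := Nat.cast_nonneg _
      have hlt : ((i : ℕ) : ℝ) + 1 ≤ (n : ℝ) := by exact_mod_cast i.isLt
      refine ⟨⟨hax, hxb⟩, by nlinarith, by nlinarith⟩
    · rintro ⟨⟨hax, hxb⟩, hcy, hyn⟩
      obtain ⟨i, h1, h2⟩ := exists_row hh c n y hcy hyn hn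
      exact ⟨i, ⟨hax, hxb⟩, h1, h2⟩

lemma partOn_cols {n : ℕ} {a b c d h : ℝ} (hcd : c < d) (hh : 0 < h) (hn : 0 < n)
    (hb : b = a + n * h) (R : Fin n → Rect)
    (hx1 : ∀ i, (R i).x1 = a + (i : ℕ) * h) (hx2 : ∀ i, (R i).x2 = a + ((i : ℕ) + 1) * h)
    (hy1 : ∀ i, (R i).y1 = c) (hy2 : ∀ i, (R i).y2 = d) :
    PartOn a b c d R := by
  have := partOn_transpose (partOn_rows hcd hh hn hb (fun i => (R i).transp)
    (fun i => hy1 i) (fun i => hy2 i) (fun i => hx1 i) (fun i => hx2 i))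
  exact partOn_congr (fun i => rfl) this

lemma partOn_rows_then {n : ℕ} {κ : Type} {a b c e g h : ℝ} {Q : κ → Rect}
    (hab : a < b) (hh : 0 < h) (hg : g = c + n * h) (hge : g ≤ e)
    (hQ : PartOn a b g e Q) (R : Fin n → Rect)
    (hx1 : ∀ i, (R i).x1 = a) (hx2 : ∀ i, (R i).x2 = b)
    (hy1 : ∀ i, (R i).y1 = c + (i : ℕ) * h) (hy2 : ∀ i, (R i).y2 = c + ((i : ℕ) + 1) * h) :
    PartOn a b c e (Sum.elim R Q) := by
  rcases Nat.eq_zero_or_pos n with rfl | hn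
  · have hgc : g = c := by rw [hg]; push_cast; ring
    subst hgc
    refine ⟨?_, ?_, ?_⟩
    · rintro (i | j)
      exacts [i.elim0, hQ.1 j]
    · rintro (i | i) (j | j) hij
      exacts [i.elim0, i.elim0, j.elim0, hQ.2.1 i j (by simpa using hij)]
    · rw [Set.iUnion_sum]
      simp only [Sum.elim_inl, Sum.elim_inr]
      rw [hQ.2.2]
      have : ⋃ i : Fin 0, ((R i).carrier) = ∅ := by simp
      rw [this, Set.empty_union]
  · have hcg : c ≤ g := by
      rw [hg]
      have : (0:ℝ) ≤ (n : ℝ) * h := by positivity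
      linarith
    exact partOn_glueV hcg hge (partOn_rows hab hh hn hg R hx1 hx2 hy1 hy2) hQ


lemma main_construction (pR qR D : ℝ) (m t s : ℕ) (hm : 1 ≤ m) (ht : 1 ≤ t)
    (hD : 0 < D) (hq : qR = m * pR + D) (hkey : (t : ℝ) ^ 2 * D + D ≤ pR)
    (hsub : StrictPairGen D (pR - (t : ℝ) ^ 2 * D) (pR - (t : ℝ) ^ 2 * D) D s) :
    StrictPairGen pR qR qR pR (m + 2 * t + 1 + s) := by
  obtain ⟨S1, S2, σs, hS1, hS2, hmS⟩ := hsub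
  have hT1R : (1 : ℝ) ≤ (t : ℝ) := by exact_mod_cast ht
  have hT2R : (1 : ℝ) ≤ (t : ℝ) ^ 2 := by nlinarith
  have hDT2 : D ≤ (t : ℝ) ^ 2 * D := by nlinarith
  have hP0 : 0 < pR := by nlinarith
  have hTD2 : (t : ℝ) * D ≤ (t : ℝ) ^ 2 * D := by nlinarith
  have hu1 : 0 < (t : ℝ) * D := by nlinarith
  have hu1p : (t : ℝ) * D < pR := by linarith
  have hu2p : (t : ℝ) ^ 2 * D < pR := by linarith
  have hrD : D ≤ pR - (t : ℝ) ^ 2 * D := by linarith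
  have hM1 : (1 : ℝ) ≤ (m : ℝ) := by exact_mod_cast hm
  have hmc : ((m - 1 : ℕ) : ℝ) = (m : ℝ) - 1 := by rw [Nat.cast_sub hm]; norm_num
  set y0 : ℝ := ((m - 1 : ℕ) : ℝ) * pR with hy0def
  have hq' : qR = y0 + pR + D := by rw [hy0def, hmc, hq]; ring
  have hy0nn : 0 ≤ y0 := by rw [hy0def, hmc]; nlinarith
  have pS1 : PartOn 0 D 0 (pR - (t : ℝ) ^ 2 * D) S1 := hS1
  have pS2 : PartOn 0 (pR - (t : ℝ) ^ 2 * D) 0 D (fun i => S2 (σs i)) :=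
    partOn_reindex σs hS2
  -- the carved columns, shared by both partitions
  have hcols : PartOn 0 ((t : ℝ) * D) y0 (y0 + (t : ℝ) * D) (fun j : Fin t => (⟨((j : ℕ) : ℝ) * D, (((j : ℕ) : ℝ) + 1) * D, y0, y0 + (t : ℝ) * D⟩ : Rect)) :=
    partOn_cols (by linarith) hD ht (by ring) _
      (fun j => by ring) (fun j => by ring)
      (fun j => rfl) (fun j => rfl)
  -- the strip blocks, shared by both partitions
  have hblocks : PartOn 0 ((t : ℝ) ^ 2 * D) (y0 + pR) qR (fun j : Fin t => (⟨((j : ℕ) : ℝ) * ((t : ℝ) * D), (((j : ℕ) : ℝ) + 1) * ((t : ℝ) * D), y0 + pR, qR⟩ : Rect)) :=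
    partOn_cols (by linarith) hu1 ht (by ring) _
      (fun j => by ring) (fun j => by ring)
      (fun j => rfl) (fun j => rfl)
  -- first partition: special square
  have htop1 : PartOn 0 ((t : ℝ) * D) (y0 + (t : ℝ) * D) (y0 + pR) (fun _ : Unit => (⟨0, (t : ℝ) * D, y0 + (t : ℝ) * D, y0 + pR⟩ : Rect)) :=
    partOn_single hu1 (by linarith)
  have hleft1 : PartOn 0 ((t : ℝ) * D) y0 (y0 + pR) (Sum.elim (fun j : Fin t => (⟨((j : ℕ) : ℝ) * D, (((j : ℕ) : ℝ) + 1) * D, y0, y0 + (t : ℝ) * D⟩ : Rect)) (fun _ : Unit => (⟨0, (t : ℝ) * D, y0 + (t : ℝ) * D, y0 + pR⟩ : Rect))) :=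
    partOn_glueV (by linarith) (by linarith) hcols htop1
  have hright1 : PartOn ((t : ℝ) * D) pR y0 (y0 + pR) (fun _ : Unit => (⟨(t : ℝ) * D, pR, y0, y0 + pR⟩ : Rect)) :=
    partOn_single hu1p (by linarith)
  have hspecial1 : PartOn 0 pR y0 (y0 + pR) (Sum.elim (Sum.elim (fun j : Fin t => (⟨((j : ℕ) : ℝ) * D, (((j : ℕ) : ℝ) + 1) * D, y0, y0 + (t : ℝ) * D⟩ : Rect)) (fun _ : Unit => (⟨0, (t : ℝ) * D, y0 + (t : ℝ) * D, y0 + pR⟩ : Rect))) (fun _ : Unit => (⟨(t : ℝ) * D, pR, y0, y0 + pR⟩ : Rect))) :=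
    partOn_glueH (by linarith) (by linarith) hleft1 hright1
  -- first partition: strip
  have hrem1 : PartOn ((t : ℝ) ^ 2 * D) pR (y0 + pR) qR (fun i : Fin s => (S2 (σs i)).translate ((t : ℝ) ^ 2 * D) (y0 + pR)) :=
    (partOn_translate pS2 ((t : ℝ) ^ 2 * D) (y0 + pR)).copy
      (by ring) (by ring) (by ring) (by linarith)
  have hstrip1 : PartOn 0 pR (y0 + pR) qR (Sum.elim (fun j : Fin t => (⟨((j : ℕ) : ℝ) * ((t : ℝ) * D), (((j : ℕ) : ℝ) + 1) * ((t : ℝ) * D), y0 + pR, qR⟩ : Rect)) (fun i : Fin s => (S2 (σs i)).translate ((t : ℝ) ^ 2 * D) (y0 + pR))) :=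
    partOn_glueH (by linarith) (by linarith) hblocks hrem1
  have htoppart1 : PartOn 0 pR y0 qR
      (Sum.elim (Sum.elim (Sum.elim (fun j : Fin t => (⟨((j : ℕ) : ℝ) * D, (((j : ℕ) : ℝ) + 1) * D, y0, y0 + (t : ℝ) * D⟩ : Rect)) (fun _ : Unit => (⟨0, (t : ℝ) * D, y0 + (t : ℝ) * D, y0 + pR⟩ : Rect))) (fun _ : Unit => (⟨(t : ℝ) * D, pR, y0, y0 + pR⟩ : Rect))) (Sum.elim (fun j : Fin t => (⟨((j : ℕ) : ℝ) * ((t : ℝ) * D), (((j : ℕ) : ℝ) + 1) * ((t : ℝ) * D), y0 + pR, qR⟩ : Rect)) (fun i : Fin s => (S2 (σs i)).translate ((t : ℝ) ^ 2 * D) (y0 + pR)))) :=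
    partOn_glueV (by linarith) (by linarith) hspecial1 hstrip1
  have hF1 : PartOn 0 pR 0 qR (Sum.elim (fun i : Fin (m - 1) => (⟨0, pR, ((i : ℕ) : ℝ) * pR, (((i : ℕ) : ℝ) + 1) * pR⟩ : Rect)) (Sum.elim (Sum.elim (Sum.elim (fun j : Fin t => (⟨((j : ℕ) : ℝ) * D, (((j : ℕ) : ℝ) + 1) * D, y0, y0 + (t : ℝ) * D⟩ : Rect)) (fun _ : Unit => (⟨0, (t : ℝ) * D, y0 + (t : ℝ) * D, y0 + pR⟩ : Rect))) (fun _ : Unit => (⟨(t : ℝ) * D, pR, y0, y0 + pR⟩ : Rect))) (Sum.elim (fun j : Fin t => (⟨((j : ℕ) : ℝ) * ((t : ℝ) * D), (((j : ℕ) : ℝ) + 1) * ((t : ℝ) * D), y0 + pR, qR⟩ : Rect)) (fun i : Fin s => (S2 (σs i)).translate ((t : ℝ) ^ 2 * D) (y0 + pR))))) :=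
    partOn_rows_then hP0 hP0 (by rw [hy0def]; ring) (by linarith) htoppart1 _
      (fun i => rfl) (fun i => rfl) (fun i => by ring) (fun i => by ring)
  -- second partition (before transposing)
  have hbr2 : PartOn ((t : ℝ) * D) pR y0 (y0 + (t : ℝ) * D) (fun _ : Unit => (⟨(t : ℝ) * D, pR, y0, y0 + (t : ℝ) * D⟩ : Rect)) :=
    partOn_single hu1p (by linarith)
  have hbottom2 : PartOn 0 pR y0 (y0 + (t : ℝ) * D) (Sum.elim (fun j : Fin t => (⟨((j : ℕ) : ℝ) * D, (((j : ℕ) : ℝ) + 1) * D, y0, y0 + (t : ℝ) * D⟩ : Rect)) (fun _ : Unit => (⟨(t : ℝ) * D, pR, y0, y0 + (t : ℝ) * D⟩ : Rect))) :=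
    partOn_glueH (by linarith) (by linarith) hcols hbr2
  have htop2 : PartOn 0 pR (y0 + (t : ℝ) * D) (y0 + pR) (fun _ : Unit => (⟨0, pR, y0 + (t : ℝ) * D, y0 + pR⟩ : Rect)) :=
    partOn_single hP0 (by linarith)
  have hspecial2 : PartOn 0 pR y0 (y0 + pR) (Sum.elim (Sum.elim (fun j : Fin t => (⟨((j : ℕ) : ℝ) * D, (((j : ℕ) : ℝ) + 1) * D, y0, y0 + (t : ℝ) * D⟩ : Rect)) (fun _ : Unit => (⟨(t : ℝ) * D, pR, y0, y0 + (t : ℝ) * D⟩ : Rect))) (fun _ : Unit => (⟨0, pR, y0 + (t : ℝ) * D, y0 + pR⟩ : Rect))) :=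
    partOn_glueV (by linarith) (by linarith) hbottom2 htop2
  have hrem2 : PartOn ((t : ℝ) ^ 2 * D) pR (y0 + pR) qR (fun i : Fin s => ((S1 i).transp).translate ((t : ℝ) ^ 2 * D) (y0 + pR)) :=
    (partOn_translate (partOn_transpose pS1) ((t : ℝ) ^ 2 * D) (y0 + pR)).copy
      (by ring) (by ring) (by ring) (by linarith)
  have hstrip2 : PartOn 0 pR (y0 + pR) qR (Sum.elim (fun j : Fin t => (⟨((j : ℕ) : ℝ) * ((t : ℝ) * D), (((j : ℕ) : ℝ) + 1) * ((t : ℝ) * D), y0 + pR, qR⟩ : Rect)) (fun i : Fin s => ((S1 i).transp).translate ((t : ℝ) ^ 2 * D) (y0 + pR))) :=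
    partOn_glueH (by linarith) (by linarith) hblocks hrem2
  have htoppart2 : PartOn 0 pR y0 qR
      (Sum.elim (Sum.elim (Sum.elim (fun j : Fin t => (⟨((j : ℕ) : ℝ) * D, (((j : ℕ) : ℝ) + 1) * D, y0, y0 + (t : ℝ) * D⟩ : Rect)) (fun _ : Unit => (⟨(t : ℝ) * D, pR, y0, y0 + (t : ℝ) * D⟩ : Rect))) (fun _ : Unit => (⟨0, pR, y0 + (t : ℝ) * D, y0 + pR⟩ : Rect))) (Sum.elim (fun j : Fin t => (⟨((j : ℕ) : ℝ) * ((t : ℝ) * D), (((j : ℕ) : ℝ) + 1) * ((t : ℝ) * D), y0 + pR, qR⟩ : Rect)) (fun i : Fin s => ((S1 i).transp).translate ((t : ℝ) ^ 2 * D) (y0 + pR)))) :=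
    partOn_glueV (by linarith) (by linarith) hspecial2 hstrip2
  have hG : PartOn 0 pR 0 qR (Sum.elim (fun i : Fin (m - 1) => (⟨0, pR, ((i : ℕ) : ℝ) * pR, (((i : ℕ) : ℝ) + 1) * pR⟩ : Rect)) (Sum.elim (Sum.elim (Sum.elim (fun j : Fin t => (⟨((j : ℕ) : ℝ) * D, (((j : ℕ) : ℝ) + 1) * D, y0, y0 + (t : ℝ) * D⟩ : Rect)) (fun _ : Unit => (⟨(t : ℝ) * D, pR, y0, y0 + (t : ℝ) * D⟩ : Rect))) (fun _ : Unit => (⟨0, pR, y0 + (t : ℝ) * D, y0 + pR⟩ : Rect))) (Sum.elim (fun j : Fin t => (⟨((j : ℕ) : ℝ) * ((t : ℝ) * D), (((j : ℕ) : ℝ) + 1) * ((t : ℝ) * D), y0 + pR, qR⟩ : Rect)) (fun i : Fin s => ((S1 i).transp).translate ((t : ℝ) ^ 2 * D) (y0 + pR))))) :=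
    partOn_rows_then hP0 hP0 (by rw [hy0def]; ring) (by linarith) htoppart2 _
      (fun i => rfl) (fun i => rfl) (fun i => by ring) (fun i => by ring)
  have hF2 : PartOn 0 qR 0 pR (fun x => ((Sum.elim (fun i : Fin (m - 1) => (⟨0, pR, ((i : ℕ) : ℝ) * pR, (((i : ℕ) : ℝ) + 1) * pR⟩ : Rect)) (Sum.elim (Sum.elim (Sum.elim (fun j : Fin t => (⟨((j : ℕ) : ℝ) * D, (((j : ℕ) : ℝ) + 1) * D, y0, y0 + (t : ℝ) * D⟩ : Rect)) (fun _ : Unit => (⟨(t : ℝ) * D, pR, y0, y0 + (t : ℝ) * D⟩ : Rect))) (fun _ : Unit => (⟨0, pR, y0 + (t : ℝ) * D, y0 + pR⟩ : Rect))) (Sum.elim (fun j : Fin t => (⟨((j : ℕ) : ℝ) * ((t : ℝ) * D), (((j : ℕ) : ℝ) + 1) * ((t : ℝ) * D), y0 + pR, qR⟩ : Rect)) (fun i : Fin s => ((S1 i).transp).translate ((t : ℝ) ^ 2 * D) (y0 + pR))))) x).transp) := partOn_transpose hG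
  -- the matching involution
  have hf : Function.Involutive (fun x : (Fin (m - 1) ⊕ (((Fin t ⊕ Unit) ⊕ Unit) ⊕ (Fin t ⊕ Fin s))) =>
      match x with
      | Sum.inl i => Sum.inl i
      | Sum.inr (Sum.inl (Sum.inl (Sum.inl j))) => Sum.inr (Sum.inr (Sum.inl j))
      | Sum.inr (Sum.inl (Sum.inl (Sum.inr u))) => Sum.inr (Sum.inl (Sum.inl (Sum.inr u)))
      | Sum.inr (Sum.inl (Sum.inr u)) => Sum.inr (Sum.inl (Sum.inr u))
      | Sum.inr (Sum.inr (Sum.inl j)) => Sum.inr (Sum.inl (Sum.inl (Sum.inl j)))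
      | Sum.inr (Sum.inr (Sum.inr i)) => Sum.inr (Sum.inr (Sum.inr i))) := by
    rintro (i | (((j | u) | u) | (j | i))) <;> rfl
  have hmatch : ∀ x : (Fin (m - 1) ⊕ (((Fin t ⊕ Unit) ⊕ Unit) ⊕ (Fin t ⊕ Fin s))),
      ((Sum.elim (fun i : Fin (m - 1) => (⟨0, pR, ((i : ℕ) : ℝ) * pR, (((i : ℕ) : ℝ) + 1) * pR⟩ : Rect)) (Sum.elim (Sum.elim (Sum.elim (fun j : Fin t => (⟨((j : ℕ) : ℝ) * D, (((j : ℕ) : ℝ) + 1) * D, y0, y0 + (t : ℝ) * D⟩ : Rect)) (fun _ : Unit => (⟨0, (t : ℝ) * D, y0 + (t : ℝ) * D, y0 + pR⟩ : Rect))) (fun _ : Unit => (⟨(t : ℝ) * D, pR, y0, y0 + pR⟩ : Rect))) (Sum.elim (fun j : Fin t => (⟨((j : ℕ) : ℝ) * ((t : ℝ) * D), (((j : ℕ) : ℝ) + 1) * ((t : ℝ) * D), y0 + pR, qR⟩ : Rect)) (fun i : Fin s => (S2 (σs i)).translate ((t : ℝ) ^ 2 * D) (y0 + pR))))) x).width =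 (((Sum.elim (fun i : Fin (m - 1) => (⟨0, pR, ((i : ℕ) : ℝ) * pR, (((i : ℕ) : ℝ) + 1) * pR⟩ : Rect)) (Sum.elim (Sum.elim (Sum.elim (fun j : Fin t => (⟨((j : ℕ) : ℝ) * D, (((j : ℕ) : ℝ) + 1) * D, y0, y0 + (t : ℝ) * D⟩ : Rect)) (fun _ : Unit => (⟨(t : ℝ) * D, pR, y0, y0 + (t : ℝ) * D⟩ : Rect))) (fun _ : Unit => (⟨0, pR, y0 + (t : ℝ) * D, y0 + pR⟩ : Rect))) (Sum.elim (fun j : Fin t => (⟨((j : ℕ) : ℝ) * ((t : ℝ) * D), (((j : ℕ) : ℝ) + 1) * ((t : ℝ) * D), y0 + pR, qR⟩ : Rect)) (fun i : Fin s => ((S1 i).transp).translate ((t : ℝ) ^ 2 * D) (y0 + pR))))) ((Function.Involutive.toPerm _ hf) x)).transp).width ∧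
      ((Sum.elim (fun i : Fin (m - 1) => (⟨0, pR, ((i : ℕ) : ℝ) * pR, (((i : ℕ) : ℝ) + 1) * pR⟩ : Rect)) (Sum.elim (Sum.elim (Sum.elim (fun j : Fin t => (⟨((j : ℕ) : ℝ) * D, (((j : ℕ) : ℝ) + 1) * D, y0, y0 + (t : ℝ) * D⟩ : Rect)) (fun _ : Unit => (⟨0, (t : ℝ) * D, y0 + (t : ℝ) * D, y0 + pR⟩ : Rect))) (fun _ : Unit => (⟨(t : ℝ) * D, pR, y0, y0 + pR⟩ : Rect))) (Sum.elim (fun j : Fin t => (⟨((j : ℕ) : ℝ) * ((t : ℝ) * D), (((j : ℕ) : ℝ) + 1) * ((t : ℝ) * D), y0 + pR, qR⟩ : Rect)) (fun i : Fin s => (S2 (σs i)).translate ((t : ℝ) ^ 2 * D) (y0 + pR))))) x).height = (((Sum.elim (fun i : Fin (m - 1) => (⟨0, pR, ((i : ℕ) : ℝ) * pR, (((i : ℕ) : ℝ) + 1) * pR⟩ : Rect)) (Sum.elim (Sum.elim (Sum.elim (fun j : Fin t => (⟨((j : ℕ) : ℝ) * D, (((j : ℕ) : ℝ) + 1) * D,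 y0, y0 + (t : ℝ) * D⟩ : Rect)) (fun _ : Unit => (⟨(t : ℝ) * D, pR, y0, y0 + (t : ℝ) * D⟩ : Rect))) (fun _ : Unit => (⟨0, pR, y0 + (t : ℝ) * D, y0 + pR⟩ : Rect))) (Sum.elim (fun j : Fin t => (⟨((j : ℕ) : ℝ) * ((t : ℝ) * D), (((j : ℕ) : ℝ) + 1) * ((t : ℝ) * D), y0 + pR, qR⟩ : Rect)) (fun i : Fin s => ((S1 i).transp).translate ((t : ℝ) ^ 2 * D) (y0 + pR))))) ((Function.Involutive.toPerm _ hf) x)).transp).height := by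
    rintro (i | (((j | u) | u) | (j | i))) <;>
      refine ⟨?_, ?_⟩ <;>
      simp only [Function.Involutive.coe_toPerm, Sum.elim_inl, Sum.elim_inr,
        Rect.width, Rect.height, Rect.transp, Rect.translate] <;>
      first
        | ring1
        | (ring_nf
           linarith [hq', hy0def])
        | (have hw := (hmS i).1
           have hh2 := (hmS i).2
           simp only [Rect.width, Rect.height] at hw hh2
           linarith [hw, hh2])
  have hcard : Fintype.card (Fin (m - 1) ⊕ (((Fin t ⊕ Unit) ⊕ Unit) ⊕ (Fin t ⊕ Fin s))) = m + 2 * t + 1 + s := by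
    simp only [Fintype.card_sum, Fintype.card_fin, Fintype.card_unit]
    omega
  have e : Fin (m + 2 * t + 1 + s) ≃ (Fin (m - 1) ⊕ (((Fin t ⊕ Unit) ⊕ Unit) ⊕ (Fin t ⊕ Fin s))) := (Fintype.equivFinOfCardEq hcard).symm
  refine ⟨fun i => (Sum.elim (fun i : Fin (m - 1) => (⟨0, pR, ((i : ℕ) : ℝ) * pR, (((i : ℕ) : ℝ) + 1) * pR⟩ : Rect)) (Sum.elim (Sum.elim (Sum.elim (fun j : Fin t => (⟨((j : ℕ) : ℝ) * D, (((j : ℕ) : ℝ) + 1) * D, y0, y0 + (t : ℝ) * D⟩ : Rect)) (fun _ : Unit => (⟨0, (t : ℝ) * D, y0 + (t : ℝ) * D, y0 + pR⟩ : Rect))) (fun _ : Unit => (⟨(t : ℝ) * D, pR, y0, y0 + pR⟩ : Rect))) (Sum.elim (fun j : Fin t => (⟨((j : ℕ) : ℝ) * ((t : ℝ) * D), (((j : ℕ) : ℝ) + 1) * ((t : ℝ) * D), y0 + pR, qR⟩ : Rect)) (fun i : Fin s => (S2 (σs i)).translate ((t : ℝ) ^ 2 * D) (y0 + pR))))) (e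 i), fun i => ((Sum.elim (fun i : Fin (m - 1) => (⟨0, pR, ((i : ℕ) : ℝ) * pR, (((i : ℕ) : ℝ) + 1) * pR⟩ : Rect)) (Sum.elim (Sum.elim (Sum.elim (fun j : Fin t => (⟨((j : ℕ) : ℝ) * D, (((j : ℕ) : ℝ) + 1) * D, y0, y0 + (t : ℝ) * D⟩ : Rect)) (fun _ : Unit => (⟨(t : ℝ) * D, pR, y0, y0 + (t : ℝ) * D⟩ : Rect))) (fun _ : Unit => (⟨0, pR, y0 + (t : ℝ) * D, y0 + pR⟩ : Rect))) (Sum.elim (fun j : Fin t => (⟨((j : ℕ) : ℝ) * ((t : ℝ) * D), (((j : ℕ) : ℝ) + 1) * ((t : ℝ) * D), y0 + pR, qR⟩ : Rect)) (fun i : Fin s => ((S1 i).transp).translate ((t : ℝ) ^ 2 * D) (y0 + pR))))) (e i)).transp,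
    e.trans ((Function.Involutive.toPerm _ hf).trans e.symm), ?_, ?_, ?_⟩
  · exact partOn_reindex e hF1
  · exact partOn_reindex e hF2
  · intro i
    have hswap : e ((e.trans ((Function.Involutive.toPerm _ hf).trans e.symm)) i) = (Function.Involutive.toPerm _ hf) (e i) := by
      simp [Equiv.trans_apply]
    simp only [hswap]
    exact hmatch (e i)

/-- Square-transfer reduction step: with `t = ⌊√(p/Δ − 1)⌋ ≥ 1`, a solution of size `s`
to the subproblem `(Δ, p − t²·Δ)` yields a solution of size `⌊q/p⌋ + 2t + 1 + s` to
`SIRTP(p,q)`. -/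
theorem sirtp_square_transfer_step (p q Δ t s : ℕ) (hp : 0 < p) (hpq : p < q)
    (hnd : ¬ p ∣ q) (hΔ : Δ = q % p)
    (ht : t = ⌊Real.sqrt ((p : ℝ) / (Δ : ℝ) - 1)⌋₊) (ht1 : 1 ≤ t)
    (hsub : StrictPair (Δ : ℝ) ((p - t ^ 2 * Δ : ℕ) : ℝ) s) :
    StrictPair (p : ℝ) (q : ℝ) (q / p + 2 * t + 1 + s) := by
  have hm : 1 ≤ q / p := (Nat.one_le_div_iff hp).mpr hpq.le
  have hΔpos : 0 < Δ := by
    rw [hΔ]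
    exact Nat.pos_of_ne_zero fun h0 => hnd (Nat.dvd_of_mod_eq_zero h0)
  have hΔlt : Δ < p := hΔ ▸ Nat.mod_lt q hp
  have hqe : q = q / p * p + Δ := by rw [hΔ, mul_comm]; exact (Nat.div_add_mod q p).symm
  have hDR : (0 : ℝ) < (Δ : ℝ) := by exact_mod_cast hΔpos
  have hx0 : (0 : ℝ) ≤ (p : ℝ) / (Δ : ℝ) - 1 := by
    have h1 : (1 : ℝ) ≤ (p : ℝ) / (Δ : ℝ) :=
      (one_le_div hDR).mpr (by exact_mod_cast hΔlt.le)
    linarith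
  have htle : (t : ℝ) ≤ Real.sqrt ((p : ℝ) / (Δ : ℝ) - 1) := by
    rw [ht]; exact Nat.floor_le (Real.sqrt_nonneg _)
  have ht2 : ((t : ℝ)) ^ 2 ≤ (p : ℝ) / (Δ : ℝ) - 1 := by
    nlinarith [Real.sq_sqrt hx0, Real.sqrt_nonneg ((p : ℝ) / (Δ : ℝ) - 1)]
  have hkey : (t : ℝ) ^ 2 * (Δ : ℝ) + (Δ : ℝ) ≤ (p : ℝ) := by
    have h2 := mul_le_mul_of_nonneg_right ht2 hDR.le
    rw [sub_mul, one_mul, div_mul_cancel₀ _ hDR.ne'] at h2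
    linarith
  have hle : t ^ 2 * Δ ≤ p := by
    have h3 : ((t ^ 2 * Δ : ℕ) : ℝ) ≤ (p : ℝ) := by push_cast; nlinarith
    exact_mod_cast h3
  have hcast : ((p - t ^ 2 * Δ : ℕ) : ℝ) = (p : ℝ) - (t : ℝ) ^ 2 * (Δ : ℝ) := by
    rw [Nat.cast_sub hle]; push_cast; ring
  rw [hcast] at hsub
  have hq' : (q : ℝ) = ((q / p : ℕ) : ℝ) * (p : ℝ) + (Δ : ℝ) := by exact_mod_cast hqe
  exact main_construction _ _ _ (q / p) t s hm ht1 hDR hq' hkey hsub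
end
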